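/- Let ξ = (ξ₁,ξ₂,1), η = (η₁,η₂,1) ∈ ℂ³ with (ξ,η) = ξ₁η₁ + ξ₂η₂ + 1 ≠ 0 and λ ∈ ℂ. Define B(ξ,η;λ) = λ(2 ξηᵀ/(ξ,η) − I) − ζI (a 3×3 matrix, ξηᵀ the outer product). Under the change of variables x₁ = −η₁, x₂ = −η₂, X₁ = 2λξ₁/(ξ₁η₁+ξ₂η₂+1), X₂ = 2λξ₂/(ξ₁η₁+ξ₂η₂+1), one has B(ξ,η;λ) = L_GV(x₁,x₂,X₁,X₂;−λ), where L_GV(x₁,x₂,X₁,X₂;α) = [[α−ζ−x₁X₁, −X₁x₂, X₁],[−x₁X₂, α−ζ−x₂X₂, X₂],[−x₁(x₁X₁+x₂X₂−2α), −x₂(x₁X₁+x₂X₂−2α), x₁X₁+x₂X₂−α−ζ]]. -/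
import Mathlib

open Matrix

/-- The Goncharenko–Veselov Lax matrix `L_GV(x₁,x₂,X₁,X₂;α)` with spectral parameter `ζ`. -/
noncomputable def LGVζ (x1 x2 X1 X2 α ζ : ℂ) : Matrix (Fin 3) (Fin 3) ℂ :=
  !![α - ζ - x1 * X1, -(X1 * x2), X1;
     -(x1 * X2), α - ζ - x2 * X2, X2;
     -(x1 * (x1 * X1 + x2 * X2 - 2 * α)), -(x2 * (x1 * X1 + x2 * X2 - 2 * α)),
       x1 * X1 + x2 * X2 - α - ζ]

set_option maxHeartbeats 2000000 in
theorem stmt18 (ξ1 ξ2 η1 η2 lam : ℂ) (hs : ξ1 * η1 + ξ2 * η2 + 1 ≠ 0) :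
    ∀ ζ : ℂ,
      lam • ((2 / (ξ1 * η1 + ξ2 * η2 + 1)) •
          (!![ξ1 * η1, ξ1 * η2, ξ1; ξ2 * η1, ξ2 * η2, ξ2; η1, η2, 1] :
            Matrix (Fin 3) (Fin 3) ℂ)
        - 1) - ζ • (1 : Matrix (Fin 3) (Fin 3) ℂ)
      = LGVζ (-η1) (-η2) (2 * lam * ξ1 / (ξ1 * η1 + ξ2 * η2 + 1))
          (2 * lam * ξ2 / (ξ1 * η1 + ξ2 * η2 + 1)) (-lam) ζ := by
  intro ζ
  ext i j
  fin_cases i <;> fin_cases j <;>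
    simp [LGVζ, Matrix.one_apply, Matrix.smul_apply, Matrix.sub_apply] <;>
    field_simp <;> ring
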